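/- arXiv:1801.01798 — 4 statements merged into one kernel-verified Lean document; each statement's English description precedes it below -/
import Mathlib

section
/- Let Λ be any non-empty set. Then the Banach algebra M_Λ(ℂ) of Λ×Λ complex matrices with finite ℓ¹-norm has an ultra central approximate identity if and only if Λ is finite. -/
noncomputable section

open scoped Topology Classical

universe u v

/-- The bidual of a complex normed space. -/
abbrev Bidual (A : Type*) [SeminormedAddCommGroup A] [NormedSpace ℂ A] : Type _ :=
  StrongDual ℂ (StrongDual ℂ A)

section BidualActions

variable {A : Type*} [NonUnitalNormedRing A] [NormedSpace ℂ A]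
  [IsScalarTower ℂ A A] [SMulCommClass ℂ A A]

/-- The natural left action of `A` on its bidual (coming from the Arens products, which agree
when one factor lies in `A`): `(bidualLSMul a m) f = m (fun b => f (a * b))`. -/
def bidualLSMul (a : A) (m : Bidual A) : Bidual A :=
  m.comp ((ContinuousLinearMap.compL ℂ A A ℂ).flip (ContinuousLinearMap.mul ℂ A a))

/-- The natural right action of `A` on its bidual:
`(bidualRSMul m a) f = m (fun b => f (b * a))`. -/
def bidualRSMul (m : Bidual A) (a : A) : Bidual A :=
  m.comp ((ContinuousLinearMap.compL ℂ A A ℂ).flip ((ContinuousLinearMap.mul ℂ A).flip a))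

end BidualActions

/-- A Banach algebra `A` has an *ultra central approximate identity* if there is a net
`(e α)` in the bidual `A**` such that `a · e α = e α · a` for all `a ∈ A` and
`e α · a → a` in norm, `A` being identified with its canonical image in `A**`. -/
def HasUltraCentralApproximateIdentity (A : Type u) [NonUnitalNormedRing A] [NormedSpace ℂ A]
    [IsScalarTower ℂ A A] [SMulCommClass ℂ A A] : Prop :=
  ∃ (ι : Type u) (_ : Preorder ι) (_ : Nonempty ι) (_ : IsDirected ι (· ≤ ·))
    (e : ι → Bidual A),
    (∀ (a : A) (α : ι), bidualLSMul a (e α) = bidualRSMul (e α) a) ∧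
    ∀ a : A, Filter.Tendsto (fun α => bidualRSMul (e α) a) Filter.atTop
      (𝓝 (NormedSpace.inclusionInDoubleDual ℂ A a))

/-- `B` is (a realization of) the Banach algebra `M_Λ(ℂ)` of `Λ × Λ` complex matrices with
finite `ℓ¹`-norm and matrix multiplication, where `E i j` is the matrix unit with `1` in
position `(i, j)` and `0` elsewhere:  the matrix units multiply as usual, finitely supported
matrices have the `ℓ¹`-norm, and they are dense. -/
structure IsL1MatrixAlgebra (Λ : Type v) (B : Type u) [NonUnitalNormedRing B]
    [NormedSpace ℂ B] [IsScalarTower ℂ B B] [SMulCommClass ℂ B B] [CompleteSpace B]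
    (E : Λ → Λ → B) : Prop where
  mul_matrix_unit : ∀ i j k l, E i j * E k l = if j = k then E i l else 0
  norm_eq : ∀ x : (Λ × Λ) →₀ ℂ,
    ‖x.sum fun p c => c • E p.1 p.2‖ = x.sum fun _ c => ‖c‖
  dense : DenseRange fun x : (Λ × Λ) →₀ ℂ => x.sum fun p c => c • E p.1 p.2

/-!
Evaluating an element `m` of the bidual at the functional reading off the `(i, j)` entry and using
`E i j * E k l = δ j k • E i l` shows that a central `m` takes the same value `c` at all diagonal
coordinate functionals. If `m` belongs to an ultra central approximate identity, `c ≠ 0` because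
`m · E i i` is close to `E i i`. The partial trace over `n` diagonal entries has norm at most `1`
(the dual of `ℓ¹` is `ℓ^∞`), yet `m` sends it to `n c`, so `n ≤ ‖m‖ / ‖c‖` and `Λ` is finite.
Conversely, for finite `Λ` the identity matrix `∑ i, E i i` is a unit of `M_Λ(ℂ)`, and its
canonical image in the bidual is a constant ultra central approximate identity.
-/

open Filter ContinuousLinearMap

theorem exists_strongDual_comp_eq_of_norm_le {𝕜 V F : Type*} [RCLike 𝕜] [AddCommGroup V]
    [Module 𝕜 V] [SeminormedAddCommGroup F] [NormedSpace 𝕜 F] (Φ : V →ₗ[𝕜] F) (ψ : V →ₗ[𝕜] 𝕜)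
    (h : ∀ x, ‖ψ x‖ ≤ ‖Φ x‖) : ∃ g : StrongDual 𝕜 F, ‖g‖ ≤ 1 ∧ ∀ x, g (Φ x) = ψ x := by
  have hker : LinearMap.ker Φ ≤ LinearMap.ker ψ := fun x hx => by
    simpa [LinearMap.mem_ker.mp hx] using h x
  set f : Module.Dual 𝕜 (LinearMap.range Φ) :=
    (LinearMap.ker Φ).liftQ ψ hker ∘ₗ Φ.quotKerEquivRange.symm.toLinearMap
  have hf : ∀ x, f ⟨Φ x, Φ.mem_range_self x⟩ = ψ x := fun x => by
    simp only [f, LinearMap.comp_apply, LinearEquiv.coe_coe,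
      LinearMap.quotKerEquivRange_symm_apply_image, Submodule.mkQ_apply, Submodule.liftQ_apply]
  obtain ⟨g, hgf, hg⟩ := Module.Dual.exists_continuous_extension_of_le_seminorm _ f
    (p := normSeminorm 𝕜 F) continuous_norm (by rintro ⟨_, x, rfl⟩; simpa [hf] using h x)
  exact ⟨g, g.opNorm_le_bound zero_le_one (by simpa using hg),
    fun x => (hgf ⟨Φ x, Φ.mem_range_self x⟩).trans (hf x)⟩

section Bidual

variable {A : Type*} [NonUnitalNormedRing A] [NormedSpace ℂ A]
  [IsScalarTower ℂ A A] [SMulCommClass ℂ A A]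

theorem bidualLSMul_apply (a : A) (m : Bidual A) (f : StrongDual ℂ A) :
    bidualLSMul a m f = m (f.comp (mul ℂ A a)) := rfl

theorem bidualRSMul_apply (m : Bidual A) (a : A) (f : StrongDual ℂ A) :
    bidualRSMul m a f = m (f.comp ((mul ℂ A).flip a)) := rfl

theorem bidualLSMul_inclusionInDoubleDual (a b : A) :
    bidualLSMul a (NormedSpace.inclusionInDoubleDual ℂ A b) =
      NormedSpace.inclusionInDoubleDual ℂ A (a * b) := rfl

theorem bidualRSMul_inclusionInDoubleDual (a b : A) :
    bidualRSMul (NormedSpace.inclusionInDoubleDual ℂ A a) b =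
      NormedSpace.inclusionInDoubleDual ℂ A (a * b) := rfl

end Bidual

theorem hasUltraCentralApproximateIdentity_of_mul_one {A : Type u} [NonUnitalNormedRing A]
    [NormedSpace ℂ A] [IsScalarTower ℂ A A] [SMulCommClass ℂ A A] (one : A)
    (one_mul : ∀ a, one * a = a) (mul_one : ∀ a, a * one = a) :
    HasUltraCentralApproximateIdentity A := by
  refine ⟨PUnit, inferInstance, inferInstance, inferInstance,
    fun _ => NormedSpace.inclusionInDoubleDual ℂ A one, fun a _ => ?_, fun a => ?_⟩
  · rw [bidualLSMul_inclusionInDoubleDual, bidualRSMul_inclusionInDoubleDual, one_mul, mul_one]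
  · simp only [bidualRSMul_inclusionInDoubleDual, one_mul]
    exact tendsto_const_nhds

namespace IsL1MatrixAlgebra

variable {Λ : Type v} {B : Type u} [NonUnitalNormedRing B] [NormedSpace ℂ B]
  [IsScalarTower ℂ B B] [SMulCommClass ℂ B B] [CompleteSpace B] {E : Λ → Λ → B}

theorem continuousLinearMap_ext (hE : IsL1MatrixAlgebra Λ B E) {F : Type*} [TopologicalSpace F]
    [T2Space F] [AddCommMonoid F] [Module ℂ F] {f g : B →L[ℂ] F}
    (h : ∀ i j, f (E i j) = g (E i j)) : f = g := by
  have hcomb : (f : B →ₗ[ℂ] F) ∘ₗ Finsupp.linearCombination ℂ (Function.uncurry E) =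
      (g : B →ₗ[ℂ] F) ∘ₗ Finsupp.linearCombination ℂ (Function.uncurry E) :=
    Finsupp.lhom_ext fun ⟨i, j⟩ c => by simp [h]
  exact DFunLike.coe_injective <|
    hE.dense.equalizer f.continuous g.continuous (congrArg DFunLike.coe hcomb)

theorem exists_strongDual_apply_eq (hE : IsL1MatrixAlgebra Λ B E) (c : Λ → Λ → ℂ)
    (hc : ∀ i j, ‖c i j‖ ≤ 1) :
    ∃ φ : StrongDual ℂ B, ‖φ‖ ≤ 1 ∧ ∀ i j, φ (E i j) = c i j := by
  obtain ⟨φ, hφ, hφc⟩ := exists_strongDual_comp_eq_of_norm_le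
    (Finsupp.linearCombination ℂ (Function.uncurry E))
    (Finsupp.linearCombination ℂ (Function.uncurry c)) fun x => by
      calc ‖x.sum fun p a => a • Function.uncurry c p‖
          ≤ x.sum fun _ a => ‖a‖ := (norm_sum_le _ _).trans <| Finset.sum_le_sum fun p _ => by
            simpa [norm_smul] using mul_le_of_le_one_right (norm_nonneg (x p))
              (show ‖Function.uncurry c p‖ ≤ 1 from hc p.1 p.2)
        _ = _ := (hE.norm_eq x).symm
  exact ⟨φ, hφ, fun i j => by simpa using hφc (Finsupp.single (i, j) 1)⟩

theorem exists_strongDual_apply_eq_indicator (hE : IsL1MatrixAlgebra Λ B E)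
    (T : Set (Λ × Λ)) : ∃ φ : StrongDual ℂ B, ‖φ‖ ≤ 1 ∧ ∀ i j, φ (E i j) = T.indicator 1 (i, j) :=
  hE.exists_strongDual_apply_eq _ fun _ _ => (norm_indicator_le_norm_self _ _).trans_eq norm_one

def indicatorFunctional (hE : IsL1MatrixAlgebra Λ B E) (T : Set (Λ × Λ)) : StrongDual ℂ B :=
  (hE.exists_strongDual_apply_eq_indicator T).choose

theorem norm_indicatorFunctional_le (hE : IsL1MatrixAlgebra Λ B E) (T : Set (Λ × Λ)) :
    ‖hE.indicatorFunctional T‖ ≤ 1 :=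
  (hE.exists_strongDual_apply_eq_indicator T).choose_spec.1

theorem indicatorFunctional_apply (hE : IsL1MatrixAlgebra Λ B E) (T : Set (Λ × Λ)) (i j : Λ) :
    hE.indicatorFunctional T (E i j) = T.indicator 1 (i, j) :=
  (hE.exists_strongDual_apply_eq_indicator T).choose_spec.2 i j

theorem indicatorFunctional_comp_mul (hE : IsL1MatrixAlgebra Λ B E) (i j : Λ) :
    (hE.indicatorFunctional {(i, j)}).comp (mul ℂ B (E i j)) = hE.indicatorFunctional {(j, j)} :=
  hE.continuousLinearMap_ext fun k l => by
    by_cases hjk : j = k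
    · subst hjk
      simp [hE.mul_matrix_unit, indicatorFunctional_apply, Set.indicator_apply]
    · simp [hE.mul_matrix_unit, indicatorFunctional_apply, hjk, Ne.symm hjk]

theorem indicatorFunctional_comp_mul_flip (hE : IsL1MatrixAlgebra Λ B E) (i j : Λ) :
    (hE.indicatorFunctional {(i, j)}).comp ((mul ℂ B).flip (E i j)) =
      hE.indicatorFunctional {(i, i)} :=
  hE.continuousLinearMap_ext fun k l => by
    by_cases hli : l = i
    · subst hli
      simp [hE.mul_matrix_unit, indicatorFunctional_apply, Set.indicator_apply]
    · simp [hE.mul_matrix_unit, indicatorFunctional_apply, hli]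

theorem indicatorFunctional_diagonal (hE : IsL1MatrixAlgebra Λ B E) (S : Finset Λ) :
    hE.indicatorFunctional ((fun i => (i, i)) '' S) = ∑ i ∈ S, hE.indicatorFunctional {(i, i)} :=
  hE.continuousLinearMap_ext fun k l => by
    by_cases hkl : k = l
    · subst hkl
      simp [indicatorFunctional_apply, Set.indicator_apply]
    · have hoff : ∀ i, ¬(k = i ∧ l = i) := fun i h => hkl (h.1.trans h.2.symm)
      simp [indicatorFunctional_apply, hoff, Ne.symm hkl]

theorem apply_indicatorFunctional_diag_eq_of_central (hE : IsL1MatrixAlgebra Λ B E)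
    {m : Bidual B} (hm : ∀ a, bidualLSMul a m = bidualRSMul m a) (i j : Λ) :
    m (hE.indicatorFunctional {(j, j)}) = m (hE.indicatorFunctional {(i, i)}) := by
  simpa only [bidualLSMul_apply, bidualRSMul_apply, indicatorFunctional_comp_mul,
    indicatorFunctional_comp_mul_flip] using
    congrArg (· (hE.indicatorFunctional {(i, j)})) (hm (E i j))

theorem finite_of_central (hE : IsL1MatrixAlgebra Λ B E) {m : Bidual B}
    (hm : ∀ a, bidualLSMul a m = bidualRSMul m a) {i₀ : Λ}
    (hi₀ : m (hE.indicatorFunctional {(i₀, i₀)}) ≠ 0) : Finite Λ := by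
  set c := m (hE.indicatorFunctional {(i₀, i₀)})
  have hcard : ∀ S : Finset Λ, (S.card : ℝ) * ‖c‖ ≤ ‖m‖ := fun S =>
    calc (S.card : ℝ) * ‖c‖ = ‖m (hE.indicatorFunctional ((fun i => (i, i)) '' S))‖ := by
          simp [indicatorFunctional_diagonal, map_sum,
            hE.apply_indicatorFunctional_diag_eq_of_central hm i₀, c]
      _ ≤ ‖m‖ * ‖hE.indicatorFunctional ((fun i => (i, i)) '' S)‖ := m.le_opNorm _
      _ ≤ ‖m‖ := mul_le_of_le_one_right m.opNorm_nonneg (hE.norm_indicatorFunctional_le _)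
  by_contra hinf
  rw [not_finite_iff_infinite] at hinf
  obtain ⟨S, hS⟩ := Infinite.exists_subset_card_eq Λ (⌈‖m‖ / ‖c‖⌉₊ + 1)
  have hc : 0 < ‖c‖ := norm_pos_iff.mpr hi₀
  have := (le_div_iff₀ hc).mpr (hcard S)
  rw [hS] at this
  push_cast at this
  linarith [Nat.le_ceil (‖m‖ / ‖c‖)]

theorem finite_of_hasUltraCentralApproximateIdentity (hE : IsL1MatrixAlgebra Λ B E)
    [Nonempty Λ] (h : HasUltraCentralApproximateIdentity B) : Finite Λ := by
  obtain ⟨ι, _, _, _, e, hcentral, happrox⟩ := h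
  obtain ⟨i₀⟩ := ‹Nonempty Λ›
  set φ := hE.indicatorFunctional {(i₀, i₀)}
  have hlim : Tendsto (fun α => e α φ) atTop (𝓝 1) := by
    simpa [Function.comp_def, bidualRSMul_apply, φ, indicatorFunctional_comp_mul_flip,
      indicatorFunctional_apply] using
      ((apply ℂ ℂ φ).continuous.tendsto _).comp (happrox (E i₀ i₀))
  obtain ⟨α, hα⟩ := (hlim.eventually_ne one_ne_zero).exists
  exact hE.finite_of_central (hcentral · α) hα

theorem hasUltraCentralApproximateIdentity_of_finite (hE : IsL1MatrixAlgebra Λ B E) [Finite Λ] :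
    HasUltraCentralApproximateIdentity B := by
  have := Fintype.ofFinite Λ
  have one_mul : mul ℂ B (∑ i, E i i) = .id ℂ B :=
    hE.continuousLinearMap_ext fun k l => by simp [hE.mul_matrix_unit]
  have mul_one : (mul ℂ B).flip (∑ i, E i i) = .id ℂ B :=
    hE.continuousLinearMap_ext fun k l => by simp [hE.mul_matrix_unit]
  exact hasUltraCentralApproximateIdentity_of_mul_one _ (DFunLike.congr_fun one_mul)
    (DFunLike.congr_fun mul_one)

end IsL1MatrixAlgebra

/-- **Theorem 2.1.** For a non-empty set `Λ`, the Banach algebra `M_Λ(ℂ)` has an ultra central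
approximate identity if and only if `Λ` is finite. -/
theorem l1MatrixAlgebra_hasUltraCentralApproximateIdentity_iff_finite
    (Λ : Type v) [Nonempty Λ] (B : Type u) [NonUnitalNormedRing B] [NormedSpace ℂ B]
    [IsScalarTower ℂ B B] [SMulCommClass ℂ B B] [CompleteSpace B]
    (E : Λ → Λ → B) (hE : IsL1MatrixAlgebra Λ B E) :
    HasUltraCentralApproximateIdentity B ↔ Finite Λ :=
  ⟨hE.finite_of_hasUltraCentralApproximateIdentity,
    fun _ => hE.hasUltraCentralApproximateIdentity_of_finite⟩
end
end

section
/- Every amenable Banach algebra has an ultra central approximate identity. -/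
noncomputable section

open scoped Topology Classical

universe u v w

/-- `T`, together with the continuous bilinear map `tmul`, is (a realization of) the
projective tensor product `A ⊗_p B` of the Banach algebras `A` and `B`:
`tmul` is contractive, multiplicative (`(a₁ ⊗ b₁)(a₂ ⊗ b₂) = a₁a₂ ⊗ b₁b₂`), every element of
`T` is approximated by finite sums of elementary tensors whose projective bound is close to
its norm, and every bounded bilinear functional on `A × B` factors through `tmul`. -/
structure IsProjectiveTensorProduct (A : Type u) (B : Type v) (T : Type w)
    [NonUnitalNormedRing A] [NormedSpace ℂ A] [IsScalarTower ℂ A A] [SMulCommClass ℂ A A]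
    [NonUnitalNormedRing B] [NormedSpace ℂ B] [IsScalarTower ℂ B B] [SMulCommClass ℂ B B]
    [NonUnitalNormedRing T] [NormedSpace ℂ T] [IsScalarTower ℂ T T] [SMulCommClass ℂ T T]
    [CompleteSpace T] (tmul : A →L[ℂ] B →L[ℂ] T) : Prop where
  norm_tmul_le : ∀ a b, ‖tmul a b‖ ≤ ‖a‖ * ‖b‖
  tmul_mul_tmul : ∀ a₁ b₁ a₂ b₂, tmul a₁ b₁ * tmul a₂ b₂ = tmul (a₁ * a₂) (b₁ * b₂)
  exists_approx_rep : ∀ (t : T) (ε : ℝ), 0 < ε → ∃ (n : ℕ) (a : Fin n → A) (b : Fin n → B),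
    ‖t - ∑ i, tmul (a i) (b i)‖ < ε ∧ ∑ i, ‖a i‖ * ‖b i‖ ≤ ‖t‖ + ε
  exists_lift_functional : ∀ f : A →L[ℂ] B →L[ℂ] ℂ,
    ∃ g : T →L[ℂ] ℂ, ∀ a b, g (tmul a b) = f a b

/-- The double adjoint (second transpose) `h** : X** → Y**` of a continuous linear map
`h : X → Y`. -/
def bidualMap {X : Type*} {Y : Type*} [SeminormedAddCommGroup X] [NormedSpace ℂ X]
    [SeminormedAddCommGroup Y] [NormedSpace ℂ Y] (h : X →L[ℂ] Y) (m : Bidual X) : Bidual Y :=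
  m.comp ((ContinuousLinearMap.compL ℂ X Y ℂ).flip h)

/-! The image `e = π**(m)` of a virtual diagonal `m` is already a (constant) ultra central
approximate identity. Indeed `π` intertwines the bimodule actions on `A ⊗_p A` with left and right
multiplication on `A` (it suffices to check this on elementary tensors, whose span is dense), so
`π**` carries `a · m = m · a` to `a · e = e · a`; and `e · a = a` is the other defining property
of `m`. -/

namespace IsProjectiveTensorProduct

variable {A : Type u} {B : Type v} {T : Type w}
  [NonUnitalNormedRing A] [NormedSpace ℂ A] [IsScalarTower ℂ A A] [SMulCommClass ℂ A A]
  [NonUnitalNormedRing B] [NormedSpace ℂ B] [IsScalarTower ℂ B B] [SMulCommClass ℂ B B]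
  [NonUnitalNormedRing T] [NormedSpace ℂ T] [IsScalarTower ℂ T T] [SMulCommClass ℂ T T]
  [CompleteSpace T] {tmul : A →L[ℂ] B →L[ℂ] T}

theorem dense_span_tmul (hT : IsProjectiveTensorProduct A B T tmul) :
    Dense (Submodule.span ℂ (Set.range fun p : A × B => tmul p.1 p.2) : Set T) := by
  intro t
  refine Metric.mem_closure_iff.2 fun ε hε => ?_
  obtain ⟨n, a, b, hclose, -⟩ := hT.exists_approx_rep t ε hε
  refine ⟨∑ i, tmul (a i) (b i), ?_, by rwa [dist_eq_norm]⟩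
  exact Submodule.sum_mem _ fun i _ => Submodule.subset_span ⟨(a i, b i), rfl⟩

theorem ext {E : Type*} [NormedAddCommGroup E] [NormedSpace ℂ E]
    (hT : IsProjectiveTensorProduct A B T tmul) {g h : T →L[ℂ] E}
    (hgh : ∀ a b, g (tmul a b) = h (tmul a b)) : g = h :=
  ContinuousLinearMap.ext_on hT.dense_span_tmul <| by
    rintro _ ⟨⟨a, b⟩, rfl⟩
    exact hgh a b

end IsProjectiveTensorProduct

section Bidual

variable {X Y Z : Type*} [SeminormedAddCommGroup X] [NormedSpace ℂ X]
  [SeminormedAddCommGroup Y] [NormedSpace ℂ Y] [SeminormedAddCommGroup Z] [NormedSpace ℂ Z]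

theorem bidualMap_comp (g : Y →L[ℂ] Z) (h : X →L[ℂ] Y) (m : Bidual X) :
    bidualMap (g.comp h) m = bidualMap g (bidualMap h m) :=
  rfl

variable {A : Type*} [NonUnitalNormedRing A] [NormedSpace ℂ A]
  [IsScalarTower ℂ A A] [SMulCommClass ℂ A A]

theorem bidualLSMul_eq_bidualMap (a : A) (m : Bidual A) :
    bidualLSMul a m = bidualMap (ContinuousLinearMap.mul ℂ A a) m :=
  rfl

theorem bidualRSMul_eq_bidualMap (m : Bidual A) (a : A) :
    bidualRSMul m a = bidualMap ((ContinuousLinearMap.mul ℂ A).flip a) m :=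
  rfl

end Bidual

theorem hasUltraCentralApproximateIdentity_of_central_rightIdentity {A : Type u}
    [NonUnitalNormedRing A] [NormedSpace ℂ A] [IsScalarTower ℂ A A] [SMulCommClass ℂ A A]
    (e : Bidual A) (he_central : ∀ a : A, bidualLSMul a e = bidualRSMul e a)
    (he_right : ∀ a : A, bidualRSMul e a = NormedSpace.inclusionInDoubleDual ℂ A a) :
    HasUltraCentralApproximateIdentity A :=
  ⟨PUnit, inferInstance, inferInstance, inferInstance, fun _ => e,
    fun a _ => he_central a, fun a => by simpa only [he_right] using tendsto_const_nhds⟩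

section VirtualDiagonal

variable {A : Type u} [NonUnitalNormedRing A] [NormedSpace ℂ A]
  [IsScalarTower ℂ A A] [SMulCommClass ℂ A A]
  {T : Type w} [NonUnitalNormedRing T] [NormedSpace ℂ T]
  [IsScalarTower ℂ T T] [SMulCommClass ℂ T T] [CompleteSpace T]
  {tmul : A →L[ℂ] A →L[ℂ] T} {π : T →L[ℂ] A}

theorem comp_leftAction_eq_mul_comp (hT : IsProjectiveTensorProduct A A T tmul)
    {L : A → T →L[ℂ] T} (hL : ∀ a b c, L a (tmul b c) = tmul (a * b) c)
    (hπ : ∀ a b, π (tmul a b) = a * b) (a : A) :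
    π.comp (L a) = (ContinuousLinearMap.mul ℂ A a).comp π :=
  hT.ext fun b c => by simp [hL, hπ, mul_assoc]

theorem comp_rightAction_eq_mul_comp (hT : IsProjectiveTensorProduct A A T tmul)
    {R : A → T →L[ℂ] T} (hR : ∀ a b c, R a (tmul b c) = tmul b (c * a))
    (hπ : ∀ a b, π (tmul a b) = a * b) (a : A) :
    π.comp (R a) = ((ContinuousLinearMap.mul ℂ A).flip a).comp π :=
  hT.ext fun b c => by simp [hR, hπ, mul_assoc]

theorem bidualLSMul_bidualMap_eq_bidualRSMul (hT : IsProjectiveTensorProduct A A T tmul)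
    {L R : A → T →L[ℂ] T}
    (hL : ∀ a b c, L a (tmul b c) = tmul (a * b) c)
    (hR : ∀ a b c, R a (tmul b c) = tmul b (c * a))
    (hπ : ∀ a b, π (tmul a b) = a * b) {m : Bidual T}
    (hm : ∀ a : A, bidualMap (L a) m = bidualMap (R a) m) (a : A) :
    bidualLSMul a (bidualMap π m) = bidualRSMul (bidualMap π m) a := by
  rw [bidualLSMul_eq_bidualMap, bidualRSMul_eq_bidualMap, ← bidualMap_comp, ← bidualMap_comp,
    ← comp_leftAction_eq_mul_comp hT hL hπ, ← comp_rightAction_eq_mul_comp hT hR hπ,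
    bidualMap_comp, bidualMap_comp, hm]

end VirtualDiagonal

theorem hasUltraCentralApproximateIdentity_of_amenable_general
    (A : Type u) [NonUnitalNormedRing A] [NormedSpace ℂ A]
    [IsScalarTower ℂ A A] [SMulCommClass ℂ A A]
    (T : Type w) [NonUnitalNormedRing T] [NormedSpace ℂ T]
    [IsScalarTower ℂ T T] [SMulCommClass ℂ T T] [CompleteSpace T]
    (tmul : A →L[ℂ] A →L[ℂ] T) (hT : IsProjectiveTensorProduct A A T tmul)
    (L R : A → T →L[ℂ] T)
    (hL : ∀ a b c, L a (tmul b c) = tmul (a * b) c)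
    (hR : ∀ a b c, R a (tmul b c) = tmul b (c * a))
    (π : T →L[ℂ] A) (hπ : ∀ a b, π (tmul a b) = a * b)
    (hm : ∃ m : Bidual T, (∀ a : A, bidualMap (L a) m = bidualMap (R a) m) ∧
      ∀ a : A, bidualRSMul (bidualMap π m) a = NormedSpace.inclusionInDoubleDual ℂ A a) :
    HasUltraCentralApproximateIdentity A := by
  obtain ⟨m, hm_central, hm_diag⟩ := hm
  exact hasUltraCentralApproximateIdentity_of_central_rightIdentity (bidualMap π m)
    (bidualLSMul_bidualMap_eq_bidualRSMul hT hL hR hπ hm_central) hm_diag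

/-- **Lemma 2.2.** Every amenable Banach algebra has an ultra central approximate identity.
Here amenability of `A` is expressed through the existence of a virtual diagonal: an element
`m` of the bidual of the projective tensor product `T = A ⊗_p A` (with its canonical
`A`-bimodule actions `L a (b ⊗ c) = (a * b) ⊗ c` and `R a (b ⊗ c) = b ⊗ (c * a)`, extended to
`T**` by taking double adjoints) such that `a · m = m · a` for all `a ∈ A` and
`π_A**(m) · a = a` for all `a ∈ A`, where `π_A : A ⊗_p A → A` is the product map. -/
theorem hasUltraCentralApproximateIdentity_of_amenable
    (A : Type u) [NonUnitalNormedRing A] [NormedSpace ℂ A]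
    [IsScalarTower ℂ A A] [SMulCommClass ℂ A A] [CompleteSpace A]
    (T : Type w) [NonUnitalNormedRing T] [NormedSpace ℂ T]
    [IsScalarTower ℂ T T] [SMulCommClass ℂ T T] [CompleteSpace T]
    (tmul : A →L[ℂ] A →L[ℂ] T) (hT : IsProjectiveTensorProduct A A T tmul)
    (L R : A → T →L[ℂ] T)
    (hL : ∀ a b c, L a (tmul b c) = tmul (a * b) c)
    (hR : ∀ a b c, R a (tmul b c) = tmul b (c * a))
    (π : T →L[ℂ] A) (hπ : ∀ a b, π (tmul a b) = a * b)
    (hm : ∃ m : Bidual T, (∀ a : A, bidualMap (L a) m = bidualMap (R a) m) ∧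
      ∀ a : A, bidualRSMul (bidualMap π m) a = NormedSpace.inclusionInDoubleDual ℂ A a) :
    HasUltraCentralApproximateIdentity A :=
  hasUltraCentralApproximateIdentity_of_amenable_general A T tmul hT L R hL hR π hπ hm
end
end

section
/- Every Banach algebra with a bounded approximate identity has an ultra central approximate identity. -/
noncomputable section

open scoped Topology Classical

universe u v

/-- A *bounded approximate identity* for a Banach algebra `A` is a norm-bounded net `(e α)`
in `A` such that `e α * a → a` and `a * e α → a` in norm for every `a ∈ A`. -/
def HasBoundedApproximateIdentity (A : Type u) [NonUnitalNormedRing A] : Prop :=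
  ∃ (ι : Type u) (_ : Preorder ι) (_ : Nonempty ι) (_ : IsDirected ι (· ≤ ·)) (e : ι → A)
    (C : ℝ), (∀ α : ι, ‖e α‖ ≤ C) ∧
    ∀ a : A, Filter.Tendsto (fun α => e α * a) Filter.atTop (𝓝 a) ∧
      Filter.Tendsto (fun α => a * e α) Filter.atTop (𝓝 a)

/-!
By Banach–Alaoglu, along an ultrafilter finer than `atTop` a bounded approximate identity
`(e α)` converges weak-* in `A**` to some `E`. Testing against `f ∈ A*` gives
`(a · E) f = lim f (a e α) = f a` and `(E · a) f = lim f (e α a) = f a`, so `E` is a mixed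
identity, `a · E = a = E · a`, and the constant net at `E` is an ultra central approximate
identity.
-/

open Filter Metric NormedSpace

theorem exists_bidual_tendsto_apply_of_norm_le {𝕜 X ι : Type*} [NontriviallyNormedField 𝕜]
    [ProperSpace 𝕜] [SeminormedAddCommGroup X] [NormedSpace 𝕜 X] (U : Ultrafilter ι)
    {x : ι → X} {C : ℝ} (hx : ∀ i, ‖x i‖ ≤ C) :
    ∃ m : StrongDual 𝕜 (StrongDual 𝕜 X),
      ∀ f : StrongDual 𝕜 X, Tendsto (fun i => f (x i)) U (𝓝 (m f)) := by
  let y : ι → WeakDual 𝕜 (StrongDual 𝕜 X) := fun i =>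
    WeakDual.toStrongDual.symm (inclusionInDoubleDual 𝕜 X (x i))
  obtain ⟨m, -, hm⟩ := (WeakDual.isCompact_closedBall 0 C).ultrafilter_le_nhds (U.map y) <| by
    rw [Ultrafilter.coe_map, le_principal_iff]
    refine mem_map.2 (univ_mem' fun i => mem_closedBall_zero_iff.2 ?_)
    exact (double_dual_bound 𝕜 X (x i)).trans (hx i)
  exact ⟨WeakDual.toStrongDual m, fun f => ((WeakDual.eval_continuous f).tendsto m).comp hm⟩

section MixedIdentity

variable {A : Type*} [NonUnitalNormedRing A] [NormedSpace ℂ A]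
  [IsScalarTower ℂ A A] [SMulCommClass ℂ A A]
  {ι : Type*} {l : Filter ι} [l.NeBot] {e : ι → A} {m : Bidual A}

theorem bidualLSMul_eq_inclusionInDoubleDual_of_tendsto
    (hm : ∀ f : StrongDual ℂ A, Tendsto (fun i => f (e i)) l (𝓝 (m f))) {a : A}
    (ha : Tendsto (fun i => a * e i) l (𝓝 a)) :
    bidualLSMul a m = inclusionInDoubleDual ℂ A a := by
  ext f
  exact tendsto_nhds_unique (hm _) ((f.continuous.tendsto a).comp ha)

theorem bidualRSMul_eq_inclusionInDoubleDual_of_tendsto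
    (hm : ∀ f : StrongDual ℂ A, Tendsto (fun i => f (e i)) l (𝓝 (m f))) {a : A}
    (ha : Tendsto (fun i => e i * a) l (𝓝 a)) :
    bidualRSMul m a = inclusionInDoubleDual ℂ A a := by
  ext f
  exact tendsto_nhds_unique (hm _) ((f.continuous.tendsto a).comp ha)

end MixedIdentity

theorem HasBoundedApproximateIdentity.exists_bidual_mixed_identity {A : Type u}
    [NonUnitalNormedRing A] [NormedSpace ℂ A] [IsScalarTower ℂ A A] [SMulCommClass ℂ A A]
    (h : HasBoundedApproximateIdentity A) :
    ∃ E : Bidual A, ∀ a : A, bidualLSMul a E = inclusionInDoubleDual ℂ A a ∧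
      bidualRSMul E a = inclusionInDoubleDual ℂ A a := by
  obtain ⟨ι, _, _, _, e, C, hC, he⟩ := h
  have : (atTop : Filter ι).NeBot := atTop_neBot_iff.2 ⟨‹_›, ‹_›⟩
  let U : Ultrafilter ι := .of atTop
  have hU : (U : Filter ι) ≤ atTop := Ultrafilter.of_le _
  obtain ⟨E, hE⟩ := exists_bidual_tendsto_apply_of_norm_le (𝕜 := ℂ) U hC
  exact ⟨E, fun a => ⟨bidualLSMul_eq_inclusionInDoubleDual_of_tendsto hE ((he a).2.mono_left hU),
    bidualRSMul_eq_inclusionInDoubleDual_of_tendsto hE ((he a).1.mono_left hU)⟩⟩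

theorem hasUltraCentralApproximateIdentity_of_hasBoundedApproximateIdentity_general
    (A : Type u) [NonUnitalNormedRing A] [NormedSpace ℂ A]
    [IsScalarTower ℂ A A] [SMulCommClass ℂ A A]
    (h : HasBoundedApproximateIdentity A) :
    HasUltraCentralApproximateIdentity A := by
  obtain ⟨E, hE⟩ := h.exists_bidual_mixed_identity
  refine ⟨PUnit, inferInstance, inferInstance, inferInstance, fun _ => E, fun a _ => ?_,
    fun a => ?_⟩
  · rw [(hE a).1, (hE a).2]
  · simp only [(hE a).2, tendsto_const_nhds]

/-- Every Banach algebra with a bounded approximate identity has an ultra central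
approximate identity. -/
theorem hasUltraCentralApproximateIdentity_of_hasBoundedApproximateIdentity
    (A : Type u) [NonUnitalNormedRing A] [NormedSpace ℂ A]
    [IsScalarTower ℂ A A] [SMulCommClass ℂ A A] [CompleteSpace A]
    (h : HasBoundedApproximateIdentity A) :
    HasUltraCentralApproximateIdentity A :=
  hasUltraCentralApproximateIdentity_of_hasBoundedApproximateIdentity_general A h
end
end

section
/- Let S = ℕ with multiplication st = min(s,t) and let w(n) = eⁿ. Then the weighted semigroup algebra ℓ¹(S,w) has a central approximate identity but does not have a bounded approximate identity. -/
noncomputable section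

open scoped Topology Classical

universe u

/-- A *central approximate identity* for a Banach algebra `A` is a net `(e α)` in `A` such
that `a * e α = e α * a` for all `a` and `e α * a → a` in norm for every `a ∈ A`. -/
def HasCentralApproximateIdentity (A : Type u) [NonUnitalNormedRing A] : Prop :=
  ∃ (ι : Type u) (_ : Preorder ι) (_ : Nonempty ι) (_ : IsDirected ι (· ≤ ·)) (e : ι → A),
    (∀ (a : A) (α : ι), a * e α = e α * a) ∧
    ∀ a : A, Filter.Tendsto (fun α => e α * a) Filter.atTop (𝓝 a)

/-! Left multiplication by a point mass `δ n` is a contraction of `ℓ¹(ℕ, eⁿ)`, because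
`δ n * δ s = δ (min n s)` only lowers weights. Every finitely supported element is fixed by
`δ n` for large `n`, and these elements are dense, so by equicontinuity `δ n * a → a` for all `a`:
`(δ n)` is a central approximate identity. If `(e α)` were a bounded approximate identity with
bound `C`, then `δ n * e α → δ n` and contractivity would give `eⁿ = ‖δ n‖ ≤ C` for every `n`. -/

open Filter

section ApproximateIdentity

variable {A : Type*} [NonUnitalSeminormedRing A]

theorem tendsto_mul_of_denseRange {ι X : Type*} {l : Filter ι} {e : ι → A} {K : ℝ}
    (hK : ∀ α b, ‖e α * b‖ ≤ K * ‖b‖) {T : X → A} (hT : DenseRange T)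
    (h : ∀ x, Tendsto (fun α => e α * T x) l (𝓝 (T x))) (a : A) :
    Tendsto (fun α => e α * a) l (𝓝 a) := by
  have hequi : Equicontinuous fun α (b : A) => e α * b :=
    (LipschitzWith.uniformEquicontinuous _ _ fun α =>
      AddMonoidHomClass.lipschitz_of_bound (AddMonoidHom.mulLeft (e α)) K (hK α)).equicontinuous
  exact hT.induction_on a (hequi.isClosed_setOfPred_tendsto continuous_id) h

theorem norm_le_of_tendsto_mul {ι : Type*} {l : Filter ι} [l.NeBot] {e : ι → A} {C : ℝ}
    (hC : ∀ α, ‖e α‖ ≤ C) {x : A} (hx : ∀ b, ‖x * b‖ ≤ ‖b‖)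
    (h : Tendsto (fun α => x * e α) l (𝓝 x)) : ‖x‖ ≤ C :=
  le_of_tendsto h.norm (Eventually.of_forall fun α => (hx (e α)).trans (hC α))

end ApproximateIdentity

theorem hasCentralApproximateIdentity_of_tendsto {A : Type u} [NonUnitalNormedRing A]
    (e : ℕ → A) (hcomm : ∀ a n, a * e n = e n * a)
    (h : ∀ a, Tendsto (fun n => e n * a) atTop (𝓝 a)) : HasCentralApproximateIdentity A :=
  ⟨ULift.{u} ℕ, inferInstance, inferInstance, inferInstance, fun n => e n.down,
    fun a n => hcomm a n.down, fun a => (h a).comp (ULift.orderIso.{u} (α := ℕ)).tendsto_atTop⟩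

theorem HasBoundedApproximateIdentity.exists_norm_le_of_norm_mul_le {A : Type u}
    [NonUnitalNormedRing A] (h : HasBoundedApproximateIdentity A) :
    ∃ C, ∀ x : A, (∀ b, ‖x * b‖ ≤ ‖b‖) → ‖x‖ ≤ C := by
  obtain ⟨ι, _, _, _, e, C, hC, htend⟩ := h
  exact ⟨C, fun x hx => norm_le_of_tendsto_mul hC hx (htend x).2⟩

section MinSemigroup

variable {B : Type*} [NonUnitalNormedRing B] [NormedSpace ℂ B] {δ : ℕ → B}

theorem norm_pointMass_eq_exp
    (hnorm : ∀ x : ℕ →₀ ℂ,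
      ‖x.sum fun s c => c • δ s‖ = x.sum fun s c => ‖c‖ * Real.exp s) (n : ℕ) :
    ‖δ n‖ = Real.exp n := by
  simpa using hnorm (Finsupp.single n 1)

theorem pointMass_mul_sum [SMulCommClass ℂ B B] (hmul : ∀ s t : ℕ, δ s * δ t = δ (min s t))
    (n : ℕ) (x : ℕ →₀ ℂ) :
    δ n * (x.sum fun s c => c • δ s) = x.sum fun s c => c • δ (min n s) := by
  simp only [Finsupp.mul_sum, mul_smul_comm, hmul]

theorem norm_pointMass_mul_le [SMulCommClass ℂ B B]
    (hmul : ∀ s t : ℕ, δ s * δ t = δ (min s t))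
    (hnorm : ∀ x : ℕ →₀ ℂ,
      ‖x.sum fun s c => c • δ s‖ = x.sum fun s c => ‖c‖ * Real.exp s)
    (hdense : DenseRange fun x : ℕ →₀ ℂ => x.sum fun s c => c • δ s) (n : ℕ) (b : B) :
    ‖δ n * b‖ ≤ ‖b‖ := by
  refine hdense.induction_on b
    (isClosed_le (continuous_const.mul continuous_id).norm continuous_norm) fun x => ?_
  rw [pointMass_mul_sum hmul, hnorm x]
  calc ‖x.sum fun s c => c • δ (min n s)‖
      ≤ x.sum fun s c => ‖c • δ (min n s)‖ := norm_sum_le _ _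
    _ ≤ x.sum fun s c => ‖c‖ * Real.exp s := by
        refine Finset.sum_le_sum fun s _ => ?_
        dsimp only
        rw [norm_smul, norm_pointMass_eq_exp hnorm]
        gcongr
        exact_mod_cast min_le_right n s

theorem mul_pointMass_comm [IsScalarTower ℂ B B] [SMulCommClass ℂ B B]
    (hmul : ∀ s t : ℕ, δ s * δ t = δ (min s t))
    (hdense : DenseRange fun x : ℕ →₀ ℂ => x.sum fun s c => c • δ s) (b : B) (n : ℕ) :
    b * δ n = δ n * b := by
  refine hdense.induction_on b
    (isClosed_eq (continuous_id.mul continuous_const) (continuous_const.mul continuous_id))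
    fun x => ?_
  simp only [Finsupp.sum_mul, pointMass_mul_sum hmul, smul_mul_assoc, hmul, min_comm]

theorem pointMass_mul_sum_eq_of_le [SMulCommClass ℂ B B]
    (hmul : ∀ s t : ℕ, δ s * δ t = δ (min s t)) {x : ℕ →₀ ℂ} {n : ℕ}
    (hn : x.support.sup id ≤ n) :
    δ n * (x.sum fun s c => c • δ s) = x.sum fun s c => c • δ s := by
  rw [pointMass_mul_sum hmul]
  exact Finsupp.sum_congr fun s hs => by
    rw [min_eq_right (show s ≤ n from (Finset.le_sup (f := id) hs).trans hn)]

theorem tendsto_pointMass_mul [SMulCommClass ℂ B B]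
    (hmul : ∀ s t : ℕ, δ s * δ t = δ (min s t))
    (hnorm : ∀ x : ℕ →₀ ℂ,
      ‖x.sum fun s c => c • δ s‖ = x.sum fun s c => ‖c‖ * Real.exp s)
    (hdense : DenseRange fun x : ℕ →₀ ℂ => x.sum fun s c => c • δ s) (a : B) :
    Tendsto (fun n => δ n * a) atTop (𝓝 a) :=
  tendsto_mul_of_denseRange (K := 1)
    (fun n b => (norm_pointMass_mul_le hmul hnorm hdense n b).trans_eq (one_mul _).symm) hdense
    (fun _ => tendsto_atTop_of_eventually_const fun _ => pointMass_mul_sum_eq_of_le hmul) a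

end MinSemigroup

theorem weightedL1_minNat_central_not_bounded_general
    (B : Type u) [NonUnitalNormedRing B] [NormedSpace ℂ B]
    [IsScalarTower ℂ B B] [SMulCommClass ℂ B B]
    (δ : ℕ → B)
    (hmul : ∀ s t : ℕ, δ s * δ t = δ (min s t))
    (hnorm : ∀ x : ℕ →₀ ℂ,
      ‖x.sum fun s c => c • δ s‖ = x.sum fun s c => ‖c‖ * Real.exp s)
    (hdense : DenseRange fun x : ℕ →₀ ℂ => x.sum fun s c => c • δ s) :
    HasCentralApproximateIdentity B ∧ ¬ HasBoundedApproximateIdentity B := by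
  refine ⟨hasCentralApproximateIdentity_of_tendsto δ (mul_pointMass_comm hmul hdense)
    (tendsto_pointMass_mul hmul hnorm hdense), fun hbai => ?_⟩
  obtain ⟨C, hC⟩ := hbai.exists_norm_le_of_norm_mul_le
  obtain ⟨n, hn⟩ := exists_nat_gt C
  have hexp : Real.exp n ≤ C := by
    rw [← norm_pointMass_eq_exp hnorm]
    exact hC (δ n) (norm_pointMass_mul_le hmul hnorm hdense n)
  linarith [Real.add_one_le_exp (n : ℝ)]

/-- **Example 2.5 (first part).**  Let `S = ℕ` be the commutative semigroup with
multiplication `s * t = min s t` and let `w n = eⁿ`.  Then the weighted semigroup algebra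
`B = ℓ¹(S, w)` — realized as a Banach algebra together with the point masses `δ : ℕ → B`,
which multiply according to `S`, carry the weighted `ℓ¹`-norm on finitely supported
combinations, and have dense linear span — has a central approximate identity but does not
have a bounded approximate identity. -/
theorem weightedL1_minNat_central_not_bounded
    (B : Type u) [NonUnitalNormedRing B] [NormedSpace ℂ B]
    [IsScalarTower ℂ B B] [SMulCommClass ℂ B B] [CompleteSpace B]
    (δ : ℕ → B)
    (hmul : ∀ s t : ℕ, δ s * δ t = δ (min s t))
    (hnorm : ∀ x : ℕ →₀ ℂ,
      ‖x.sum fun s c => c • δ s‖ = x.sum fun s c => ‖c‖ * Real.exp s)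
    (hdense : DenseRange fun x : ℕ →₀ ℂ => x.sum fun s c => c • δ s) :
    HasCentralApproximateIdentity B ∧ ¬ HasBoundedApproximateIdentity B :=
  weightedL1_minNat_central_not_bounded_general B δ hmul hnorm hdense
end
end
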